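/- Let d ≥ 3 and let F ∈ (ℂ^n)^{⊗d} be a sharp, concise, symmetric tensor of minimal border rank, with corresponding degree-d polynomial p_F. Let I ⊆ S be the ideal generated by all multidegree components Ann(F)_u with 0 < u < 𝟏 (componentwise). Then π(I_{(d−1)e_1 + e_2}) ⊆ Ann(p_F)_d. -/

import Mathlib

/-!
Common setup, following the paper "On the abundance of minimal border rank symmetric
tensors verifying Comon's conjecture".

* `S = ℂ[α_{i,j} : 1 ≤ i ≤ d, 1 ≤ j ≤ n]` is modeled as `MvPolynomial (Fin d × Fin n) ℂ`,
  with the `ℤ^d`-grading in which `deg α_{i,j} = e_i`; `Scomp n d u` is the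
  multidegree-`u` component (`u : Fin d → ℕ`).
* `V = ℂ[β_1,…,β_n]` is modeled as `MvPolynomial (Fin n) ℂ` with its standard grading;
  `Vcomp n N` is the degree-`N` component.
* The graded duals `T` and `P` are modeled by the same polynomial rings, with `S`
  (resp. `V`) acting by differentiation (`apolar`); `ann F` is the apolar
  (annihilator) ideal of `F`.
* A tensor `F ∈ (ℂ^n)^{⊗d}` is an element of the multidegree-`(1,…,1)` component
  `Scomp n d (fun _ => 1)` (a multilinear form in the `x_{i,j}`).
-/

open MvPolynomial Submodule Module

noncomputable section

namespace BorderComon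

/-- the multidegree-`u` graded component of `S`. -/
def Scomp (n d : ℕ) (u : Fin d → ℕ) : Submodule ℂ (MvPolynomial (Fin d × Fin n) ℂ) :=
  weightedHomogeneousSubmodule ℂ (fun p : Fin d × Fin n => Pi.single p.1 1) u

/-- the degree-`N` graded component of `V`. -/
def Vcomp (n : ℕ) (N : ℕ) : Submodule ℂ (MvPolynomial (Fin n) ℂ) :=
  homogeneousSubmodule (Fin n) ℂ N

/-- the diagonal ring map `π : S → V`, `α_{i,j} ↦ β_j`. -/
def piAlg (n d : ℕ) : MvPolynomial (Fin d × Fin n) ℂ →ₐ[ℂ] MvPolynomial (Fin n) ℂ :=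
  aeval (fun p : Fin d × Fin n => X p.2)

/-- `π` as a `ℂ`-linear map. -/
def piL (n d : ℕ) : MvPolynomial (Fin d × Fin n) ℂ →ₗ[ℂ] MvPolynomial (Fin n) ℂ :=
  (piAlg n d).toLinearMap

/-- the ring map `ρ : S → V`, `α_{1,j} ↦ β_j` and `α_{i,j} ↦ 0` for `i ≥ 2`
(rows are `0`-indexed, so the first row is row `0`). -/
def rho (n d : ℕ) : MvPolynomial (Fin d × Fin n) ℂ →ₐ[ℂ] MvPolynomial (Fin n) ℂ :=
  aeval (fun p : Fin d × Fin n => if (p.1 : ℕ) = 0 then X p.2 else 0)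

/-- the result of differentiating `F` by the monomial `X^a`:
`∂^a X^b = (∏_i b_i!/(b_i-a_i)!) X^{b-a}` (and `= 0` unless `a ≤ b`, which is
automatic since the descending factorial vanishes there). -/
def diffMon {σ : Type*} (a : σ →₀ ℕ) (F : MvPolynomial σ ℂ) : MvPolynomial σ ℂ :=
  ∑ b ∈ F.support, (F.coeff b * ∏ i ∈ a.support, ((b i).descFactorial (a i) : ℂ)) •
    monomial (b - a) (1 : ℂ)

/-- the apolarity action: `apolar F ψ = ψ ∘ F` is the result of letting `ψ` act on `F`
by differentiation, linearly in `ψ`. -/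
def apolar {σ : Type*} (F : MvPolynomial σ ℂ) : MvPolynomial σ ℂ →ₗ[ℂ] MvPolynomial σ ℂ :=
  Finsupp.lsum ℂ (fun a : σ →₀ ℕ => LinearMap.toSpanSingleton ℂ _ (diffMon a F)) ∘ₗ
    (AddMonoidAlgebra.coeffLinearEquiv ℂ).toLinearMap

/-- the apolar (annihilator) ideal `Ann(F) = {ψ : ψ ∘ F = 0}`, as a subspace. -/
def ann {σ : Type*} (F : MvPolynomial σ ℂ) : Submodule ℂ (MvPolynomial σ ℂ) :=
  LinearMap.ker (apolar F)

/-- the ideal `I_R ⊆ S` generated by the `2×2` minors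
`α_{i,j} α_{k,ℓ} − α_{i,ℓ} α_{k,j}`, `i < k`, `j < ℓ`. -/
def IR (n d : ℕ) : Ideal (MvPolynomial (Fin d × Fin n) ℂ) :=
  Ideal.span {q | ∃ i k : Fin d, ∃ j l : Fin n, i < k ∧ j < l ∧
    q = X (i, j) * X (k, l) - X (i, l) * X (k, j)}

/-- `J ⊆ S` is a (multigraded) homogeneous ideal: it is the sum of its
multigraded components. -/
def IsHomogS (n d : ℕ) (J : Ideal (MvPolynomial (Fin d × Fin n) ℂ)) : Prop :=
  Submodule.restrictScalars ℂ J = ⨆ u : Fin d → ℕ, (Submodule.restrictScalars ℂ J ⊓ Scomp n d u)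

/-- `I ⊆ V` is a homogeneous ideal: it is the sum of its graded components. -/
def IsHomogV (n : ℕ) (I : Ideal (MvPolynomial (Fin n) ℂ)) : Prop :=
  Submodule.restrictScalars ℂ I = ⨆ N : ℕ, (Submodule.restrictScalars ℂ I ⊓ Vcomp n N)

/-- the exponent redistribution underlying `ψ_u`: in the sorted list
`i_1 ≤ ⋯ ≤ i_N` of the indices of the monomial `β^γ` (value `j` occurring `γ j`
times, `N = |γ|`), row `i` receives the block of positions
`[∑_{i'<i} u i', ∑_{i'≤i} u i')`, while value `j` occupies positions
`[∑_{j'<j} γ j', ∑_{j'≤j} γ j')`; hence the exponent of `α_{i,j}` is the size of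
the intersection of these two intervals. -/
def distrib (n d : ℕ) (u : Fin d → ℕ) (γ : Fin n →₀ ℕ) : (Fin d × Fin n) →₀ ℕ :=
  Finsupp.equivFunOnFinite.symm fun p : Fin d × Fin n =>
    min (∑ i ∈ Finset.univ.filter fun i : Fin d => (i : ℕ) ≤ (p.1 : ℕ), u i)
        (∑ j ∈ Finset.univ.filter fun j : Fin n => (j : ℕ) ≤ (p.2 : ℕ), γ j)
    - max (∑ i ∈ Finset.univ.filter fun i : Fin d => (i : ℕ) < (p.1 : ℕ), u i)
          (∑ j ∈ Finset.univ.filter fun j : Fin n => (j : ℕ) < (p.2 : ℕ), γ j)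

/-- the linear map `ψ_u : V → S` sending a monomial `β_{i_1} β_{i_2} ⋯ β_{i_N}`
with `i_1 ≤ i_2 ≤ ⋯ ≤ i_N` to
`(α_{1,i_1} ⋯ α_{1,i_{u_1}}) (α_{2,i_{u_1+1}} ⋯ α_{2,i_{u_1+u_2}}) ⋯`.
(Its restriction to `Vcomp n (∑ i, u i)` is the map `ψ_u : V_{|u|} → S_u` of the
paper.) -/
def psi (n d : ℕ) (u : Fin d → ℕ) :
    MvPolynomial (Fin n) ℂ →ₗ[ℂ] MvPolynomial (Fin d × Fin n) ℂ :=
  AddMonoidAlgebra.mapDomainLinearMap ℂ ℂ (distrib n d u)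

/-- `Υ(I) = I_R + ∑_{u} ψ_u(I_{|u|}) ⊆ S`. -/
def Upsilon (n d : ℕ) (I : Ideal (MvPolynomial (Fin n) ℂ)) :
    Submodule ℂ (MvPolynomial (Fin d × Fin n) ℂ) :=
  restrictScalars ℂ (IR n d) ⊔
    ⨆ u : Fin d → ℕ, Submodule.map (psi n d u) (restrictScalars ℂ I ⊓ Vcomp n (∑ i, u i))

/-- the irrelevant ideal `B_X = ∏_{i=1}^d (α_{i,1},…,α_{i,n}) ⊆ S`. -/
def BX (n d : ℕ) : Ideal (MvPolynomial (Fin d × Fin n) ℂ) :=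
  ∏ i : Fin d, Ideal.span (Set.range fun j : Fin n => X (i, j))

/-- the irrelevant ideal `B_Y = (β_1,…,β_n) ⊆ V`. -/
def BY (n : ℕ) : Ideal (MvPolynomial (Fin n) ℂ) :=
  Ideal.span (Set.range X)

/-- `Σ(J) = ⊕_{a ≥ 0} ⊕_{s ∈ ℰ} π(J_{a𝟏+s}) ⊆ V`, where
`ℰ = {0, e_1, e_1+e_2, …, e_1+⋯+e_{d-1}}` (the element `s` with `m` ones is
`fun i => if i < m then 1 else 0`). -/
def SigmaMap (n d : ℕ) (J : Ideal (MvPolynomial (Fin d × Fin n) ℂ)) :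
    Submodule ℂ (MvPolynomial (Fin n) ℂ) :=
  ⨆ a : ℕ, ⨆ m : Fin d, Submodule.map (piL n d)
    (restrictScalars ℂ J ⊓ Scomp n d (fun i => a + if (i : ℕ) < (m : ℕ) then 1 else 0))

/-- the set of tensors of rank at most `r`: sums of `r` decomposable tensors
`v_1 ⊗ ⋯ ⊗ v_d = ∏_i (∑_j v_i(j) x_{i,j})`. -/
def rankLE (n d r : ℕ) : Set (MvPolynomial (Fin d × Fin n) ℂ) :=
  {F | ∃ v : Fin r → Fin d → Fin n → ℂ,
    F = ∑ s : Fin r, ∏ i : Fin d, ∑ j : Fin n, C (v s i j) * X (i, j)}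

/-- `F` has border rank at most `r`: coefficientwise (finitely many coefficients are
involved), `F` lies in the closure of the set of tensors of rank at most `r`. -/
def brkLE (n d : ℕ) (F : MvPolynomial (Fin d × Fin n) ℂ) (r : ℕ) : Prop :=
  (fun m => coeff m F) ∈ closure ((fun G => fun m => coeff m G) '' rankLE n d r)

/-- the border rank of a tensor. -/
def brk (n d : ℕ) (F : MvPolynomial (Fin d × Fin n) ℂ) : ℕ :=
  sInf {r | brkLE n d F r}

/-- polynomials that are sums of `r` `d`-th powers of linear forms. -/
def srankLE (n d r : ℕ) : Set (MvPolynomial (Fin n) ℂ) :=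
  {p | ∃ c : Fin r → Fin n → ℂ, p = ∑ s : Fin r, (∑ j : Fin n, C (c s j) * X j) ^ d}

/-- `p` has symmetric border rank at most `r`. -/
def sbrkLE (n d : ℕ) (p : MvPolynomial (Fin n) ℂ) (r : ℕ) : Prop :=
  (fun m => coeff m p) ∈ closure ((fun q => fun m => coeff m q) '' srankLE n d r)

/-- the symmetric border rank of a degree-`d` form. -/
def sbrk (n d : ℕ) (p : MvPolynomial (Fin n) ℂ) : ℕ :=
  sInf {r | sbrkLE n d p r}

/-- `F` is a symmetric tensor: invariant under the permutations of the `d` factors. -/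
def IsSymm (n d : ℕ) (F : MvPolynomial (Fin d × Fin n) ℂ) : Prop :=
  ∀ τ : Equiv.Perm (Fin d), rename (Prod.map τ id) F = F

/-- the degree-`d` polynomial `p_F` corresponding to a symmetric tensor `F`, obtained
by identifying all the rows of variables (`x_{i,j} ↦ y_j`); `F` is the polarization
of `p_F`. -/
def pF (n d : ℕ) (F : MvPolynomial (Fin d × Fin n) ℂ) : MvPolynomial (Fin n) ℂ :=
  rename Prod.snd F

/-- `F` is concise: the contraction `(ℂ^n)^* → (ℂ^n)^{⊗(d-1)}` of the first tensor
factor, `w ↦ F(x_{1,j} := w_j)`, is injective. -/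
def Concise (n d : ℕ) (F : MvPolynomial (Fin d × Fin n) ℂ) : Prop :=
  Function.Injective fun w : Fin n → ℂ =>
    aeval (fun p : Fin d × Fin n => if (p.1 : ℕ) = 0 then C (w p.2) else X p) F

/-- the ideal `∑_{0<u<𝟏} S·Ann(F)_u` generated by the components `Ann(F)_u`,
`0 < u < 𝟏` (componentwise). -/
def midIdeal (n d : ℕ) (F : MvPolynomial (Fin d × Fin n) ℂ) :
    Ideal (MvPolynomial (Fin d × Fin n) ℂ) :=
  Ideal.span (⋃ u ∈ {u : Fin d → ℕ | 0 < u ∧ u < fun _ => 1},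
    ((ann F ⊓ Scomp n d u : Submodule ℂ (MvPolynomial (Fin d × Fin n) ℂ)) :
      Set (MvPolynomial (Fin d × Fin n) ℂ)))

/-- `F` is a *sharp* tensor:
(1) `Ann(F)` has exactly `n-1` minimal generators of multidegree `𝟏`;
(2) `dim (S/Ann F)_u = n` for all `0 < u < 𝟏`;
(3) `dim (S/(Ann(F)_{e_i+e_j}))_{s e_i + e_j} = n` for all `i ≠ j`, `1 ≤ s ≤ d-1`. -/
def Sharp (n d : ℕ) (F : MvPolynomial (Fin d × Fin n) ℂ) : Prop :=
  (finrank ℂ (ann F ⊓ Scomp n d fun _ => 1 :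
        Submodule ℂ (MvPolynomial (Fin d × Fin n) ℂ)) -
      finrank ℂ (restrictScalars ℂ (midIdeal n d F) ⊓ Scomp n d fun _ => 1 :
        Submodule ℂ (MvPolynomial (Fin d × Fin n) ℂ)) = n - 1) ∧
  (∀ u : Fin d → ℕ, 0 < u → u < (fun _ => 1) →
    finrank ℂ (Scomp n d u ⧸ Submodule.comap (Scomp n d u).subtype (ann F)) = n) ∧
  (∀ i j : Fin d, i ≠ j → ∀ s : ℕ, 1 ≤ s → s ≤ d - 1 →
    finrank ℂ (Scomp n d (Pi.single i s + Pi.single j 1) ⧸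
      Submodule.comap (Scomp n d (Pi.single i s + Pi.single j 1)).subtype
        (restrictScalars ℂ (Ideal.span
          ((ann F ⊓ Scomp n d (Pi.single i 1 + Pi.single j 1) :
            Submodule ℂ (MvPolynomial (Fin d × Fin n) ℂ)) :
            Set (MvPolynomial (Fin d × Fin n) ℂ))))) = n)

/-!
Let `Ψ = fiberSum Prod.snd ∘ π` be the substitution `α_{i,j} ↦ ∑_r α_{r,j}`. The chain rule for
`π = rename Prod.snd` gives `π(ψ) ∘ p_F = π(Ψ(ψ) ∘ F)`, so it suffices that the ring map `Ψ` sends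
`I` into the ideal `Ann(F)`, i.e. that `Ψ(ψ) ∘ F = 0` for the generators `ψ ∈ Ann(F)_u`, `u < 𝟏`.
Since `u` is squarefree, `Ψ(ψ)` is a sum of row substitutions `ψ(α_{g(i),j})`. If `g` is injective
on the rows occurring in `ψ`, it agrees there with a permutation of the rows, and the symmetry of
`F` turns `ψ ∘ F = 0` into the vanishing of that term. Otherwise two rows of `ψ` are sent to one
row, in which the multilinear `F` has degree one, so the term kills `F` for degree reasons.
-/

section Apolarity

variable {σ : Type*}

theorem diffMon_eq_sum (a : σ →₀ ℕ) (F : MvPolynomial σ ℂ) :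
    diffMon a F = (AddMonoidAlgebra.coeff F).sum fun b c =>
      (c * ∏ i ∈ a.support, ((b i).descFactorial (a i) : ℂ)) • monomial (b - a) (1 : ℂ) :=
  rfl

theorem diffMon_monomial (a b : σ →₀ ℕ) (c : ℂ) :
    diffMon a (monomial b c) =
      (c * ∏ i ∈ a.support, ((b i).descFactorial (a i) : ℂ)) • monomial (b - a) (1 : ℂ) := by
  rw [diffMon_eq_sum, sum_monomial_eq (by simp)]

theorem diffMon_add (a : σ →₀ ℕ) (F G : MvPolynomial σ ℂ) :
    diffMon a (F + G) = diffMon a F + diffMon a G := by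
  simp only [diffMon_eq_sum]
  exact Finsupp.sum_add_index' (by simp) (by simp [add_mul, add_smul])

theorem diffMon_smul (a : σ →₀ ℕ) (c : ℂ) (F : MvPolynomial σ ℂ) :
    diffMon a (c • F) = c • diffMon a F := by
  induction F using MvPolynomial.induction_on' with
  | monomial b c' =>
    rw [smul_monomial, diffMon_monomial, diffMon_monomial, smul_smul, smul_eq_mul, mul_assoc]
  | add p q hp hq => rw [smul_add, diffMon_add, diffMon_add, hp, hq, smul_add]

theorem diffMon_zero (F : MvPolynomial σ ℂ) : diffMon 0 F = F := by
  induction F using MvPolynomial.induction_on' with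
  | monomial b c => simp [diffMon_monomial, smul_monomial]
  | add p q hp hq => rw [diffMon_add, hp, hq]

theorem diffMon_diffMon (a b : σ →₀ ℕ) (F : MvPolynomial σ ℂ) :
    diffMon a (diffMon b F) = diffMon (a + b) F := by
  classical
  induction F using MvPolynomial.induction_on' with
  | add p q hp hq => rw [diffMon_add, diffMon_add, diffMon_add, hp, hq]
  | monomial M c =>
    rw [diffMon_monomial, diffMon_smul, diffMon_monomial, diffMon_monomial, smul_smul, one_mul,
      tsub_tsub, add_comm b a, mul_assoc]
    congr 2
    have hsupp : (a + b).support = a.support ∪ b.support := Finsupp.support_add_eq_union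
    rw [Finset.prod_subset Finset.subset_union_right (s₂ := a.support ∪ b.support)
        (fun x _ hx => by rw [Finsupp.notMem_support_iff.mp hx]; simp),
      Finset.prod_subset Finset.subset_union_left (s₂ := a.support ∪ b.support)
        (fun x _ hx => by rw [Finsupp.notMem_support_iff.mp hx]; simp),
      hsupp, ← Finset.prod_mul_distrib]
    refine Finset.prod_congr rfl fun i _ => ?_
    rw [Finsupp.tsub_apply, Finsupp.add_apply, ← Nat.cast_mul, mul_comm,
      ← Nat.descFactorial_mul_descFactorial (Nat.le_add_left (b i) (a i)), Nat.add_sub_cancel]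

theorem apolar_monomial (F : MvPolynomial σ ℂ) (a : σ →₀ ℕ) (c : ℂ) :
    apolar F (monomial a c) = c • diffMon a F :=
  Finsupp.sum_single_index (by simp)

theorem apolar_C (F : MvPolynomial σ ℂ) (c : ℂ) : apolar F (C c) = c • F := by
  rw [C_apply, apolar_monomial, diffMon_zero]

theorem apolar_add_left (F G ψ : MvPolynomial σ ℂ) :
    apolar (F + G) ψ = apolar F ψ + apolar G ψ := by
  induction ψ using MvPolynomial.induction_on' with
  | monomial a c => simp only [apolar_monomial, diffMon_add, smul_add]
  | add p q hp hq => simp only [map_add, hp, hq]; abel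

theorem apolar_zero_left (ψ : MvPolynomial σ ℂ) : apolar (0 : MvPolynomial σ ℂ) ψ = 0 := by
  simpa using apolar_add_left 0 0 ψ

theorem apolar_mul (F φ χ : MvPolynomial σ ℂ) :
    apolar F (φ * χ) = apolar (apolar F χ) φ := by
  induction φ using MvPolynomial.induction_on' with
  | add p q hp hq => rw [add_mul, map_add, hp, hq, map_add]
  | monomial a c =>
    induction χ using MvPolynomial.induction_on' with
    | add p q hp hq => rw [mul_add, map_add, hp, hq, map_add, apolar_add_left]
    | monomial b c' =>
      rw [monomial_mul, apolar_monomial, apolar_monomial, apolar_monomial, diffMon_smul,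
        diffMon_diffMon, smul_smul, mul_comm c c']

def annIdeal (F : MvPolynomial σ ℂ) : Ideal (MvPolynomial σ ℂ) where
  __ := ann F
  smul_mem' φ χ (hχ : apolar F χ = 0) :=
    show apolar F (φ * χ) = 0 by rw [apolar_mul, hχ, apolar_zero_left]

end Apolarity

section ChainRule

variable {σ τ : Type*}

theorem diffMon_single_one (i : σ) (F : MvPolynomial σ ℂ) :
    diffMon (Finsupp.single i 1) F = pderiv i F := by
  induction F using MvPolynomial.induction_on' with
  | monomial b c =>
    rw [diffMon_monomial, pderiv_monomial, Finsupp.support_single _ one_ne_zero,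
      Finset.prod_singleton, Finsupp.single_eq_same, Nat.descFactorial_one, smul_monomial,
      smul_eq_mul, mul_one]
  | add p q hp hq => rw [diffMon_add, hp, hq, map_add]

theorem apolar_X (F : MvPolynomial σ ℂ) (i : σ) : apolar F (X i) = pderiv i F := by
  rw [X, apolar_monomial, one_smul, diffMon_single_one]

variable [Fintype σ] [DecidableEq τ]

/-- The substitution dual to `rename f` under apolarity. -/
def fiberSum (f : σ → τ) : MvPolynomial τ ℂ →ₐ[ℂ] MvPolynomial σ ℂ :=
  aeval fun j => ∑ i ∈ Finset.univ.filter (f · = j), X i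

theorem pderiv_rename (f : σ → τ) (j : τ) (F : MvPolynomial σ ℂ) :
    pderiv j (rename f F) = rename f (∑ i ∈ Finset.univ.filter (f · = j), pderiv i F) := by
  classical
  induction F using MvPolynomial.induction_on with
  | C c => simp
  | add p q hp hq => simp only [map_add, hp, hq, Finset.sum_add_distrib]
  | mul_X p i hp =>
    simp only [map_mul, rename_X, Derivation.leibniz, pderiv_X, hp, smul_eq_mul,
      Finset.sum_add_distrib, map_sum, Finset.mul_sum]
    simp [Pi.single_apply, eq_comm, apply_ite (rename f)]

theorem apolar_rename (f : σ → τ) (F : MvPolynomial σ ℂ) (χ : MvPolynomial τ ℂ) :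
    apolar (rename f F) χ = rename f (apolar F (fiberSum f χ)) := by
  induction χ using MvPolynomial.induction_on generalizing F with
  | C c => rw [apolar_C, fiberSum, aeval_C, algebraMap_eq, apolar_C, map_smul]
  | add p q hp hq => rw [map_add, hp, hq, map_add, map_add, map_add]
  | mul_X p j hp =>
    rw [apolar_mul, apolar_X, pderiv_rename, hp, map_mul, apolar_mul, fiberSum, aeval_X,
      map_sum]
    simp only [apolar_X]

end ChainRule

section ChainRuleInstances

variable {σ τ ι κ : Type*}

theorem fiberSum_equiv [Fintype σ] [DecidableEq τ] (e : σ ≃ τ) :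
    fiberSum e = rename e.symm := by
  refine MvPolynomial.algHom_ext fun j => ?_
  have hfiber : Finset.univ.filter (e · = j) = {e.symm j} := by
    ext i
    simp [← Equiv.eq_symm_apply]
  rw [fiberSum, aeval_X, hfiber, Finset.sum_singleton, rename_X]

theorem apolar_rename_rename_equiv [Fintype σ] [DecidableEq τ] (e : σ ≃ τ)
    (F ψ : MvPolynomial σ ℂ) :
    apolar (rename e F) (rename e ψ) = rename e (apolar F ψ) := by
  rw [apolar_rename, fiberSum_equiv, rename_rename, e.symm_comp_self, rename_id_apply]

theorem fiberSum_snd_X [Fintype ι] [Fintype κ] [DecidableEq κ] (j : κ) :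
    fiberSum (Prod.snd : ι × κ → κ) (X j) = ∑ i, X (i, j) := by
  rw [fiberSum, aeval_X, Finset.sum_filter, Fintype.sum_prod_type]
  simp

end ChainRuleInstances

section Grading

variable {σ ι κ : Type*}

theorem diffMon_eq_zero_of_forall_not_le {a : σ →₀ ℕ} {F : MvPolynomial σ ℂ}
    (h : ∀ b ∈ F.support, ¬ a ≤ b) : diffMon a F = 0 := by
  refine Finset.sum_eq_zero fun b hb => ?_
  obtain ⟨i, hi⟩ : ∃ i, b i < a i := by simpa [Finsupp.le_def] using h b hb
  have hfactor : ((b i).descFactorial (a i) : ℂ) = 0 := by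
    rw [Nat.descFactorial_eq_zero_iff_lt.mpr hi, Nat.cast_zero]
  rw [Finset.prod_eq_zero (i := i) (Finsupp.mem_support_iff.mpr (by omega)) hfactor, mul_zero,
    zero_smul]

theorem apolar_eq_zero_of_forall_not_le {F ψ : MvPolynomial σ ℂ}
    (h : ∀ a ∈ ψ.support, ∀ b ∈ F.support, ¬ a ≤ b) : apolar F ψ = 0 :=
  Finset.sum_eq_zero fun a ha => by
    simp [diffMon_eq_zero_of_forall_not_le (h a ha)]

theorem weight_single_fst [DecidableEq ι] (b : ι × κ →₀ ℕ) :
    Finsupp.weight (fun p : ι × κ => Pi.single p.1 1) b = ⇑(b.mapDomain Prod.fst) := by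
  ext i
  rw [Finsupp.weight_apply, Finsupp.mapDomain, Finsupp.sum, Finsupp.sum, Finset.sum_apply,
    Finsupp.finsetSum_apply]
  refine Finset.sum_congr rfl fun p _ => ?_
  simp [Pi.single_apply, Finsupp.single_apply, eq_comm]

theorem mapDomain_fst_apply [Fintype ι] [Fintype κ] (b : ι × κ →₀ ℕ) (i : ι) :
    b.mapDomain Prod.fst i = ∑ j, b (i, j) := by
  classical
  rw [Finsupp.mapDomain, Finsupp.sum_apply, Finsupp.sum_fintype _ _ (by simp),
    Fintype.sum_prod_type]
  simp [Finsupp.single_apply]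

theorem mapDomain_mono {α β : Type*} {a b : α →₀ ℕ} (f : α → β) (hab : a ≤ b) :
    a.mapDomain f ≤ b.mapDomain f := by
  obtain ⟨c, rfl⟩ := exists_add_of_le hab
  rw [Finsupp.mapDomain_add]
  exact le_self_add

theorem add_le_mapDomain_apply {α β : Type*} [DecidableEq α] (U : α →₀ ℕ) {g : α → β} {i₁ i₂ : α}
    (hne : i₁ ≠ i₂) (hg : g i₁ = g i₂) : U i₁ + U i₂ ≤ U.mapDomain g (g i₁) := by
  have hle : Finsupp.single i₁ (U i₁) + Finsupp.single i₂ (U i₂) ≤ U := fun i => by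
    by_cases h₁ : i = i₁ <;> by_cases h₂ : i = i₂ <;> simp_all [Finsupp.single_apply, eq_comm]
  simpa [Finsupp.mapDomain_add, hg] using mapDomain_mono g hle (g i₁)

end Grading

section Multigrading

variable {n d : ℕ}

theorem mapDomain_fst_of_mem_Scomp {u : Fin d → ℕ} {s : MvPolynomial (Fin d × Fin n) ℂ}
    (hs : s ∈ Scomp n d u) {b : Fin d × Fin n →₀ ℕ} (hb : b ∈ s.support) :
    ⇑(b.mapDomain Prod.fst) = u := by
  rw [← weight_single_fst]
  exact (mem_weightedHomogeneousSubmodule _ _ _ _).mp hs (mem_support_iff.mp hb)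

theorem rename_snd_mem_Vcomp {u : Fin d → ℕ} {s : MvPolynomial (Fin d × Fin n) ℂ}
    (hs : s ∈ Scomp n d u) : rename Prod.snd s ∈ Vcomp n (∑ i, u i) := by
  refine (mem_homogeneousSubmodule _ _).mpr (IsHomogeneous.rename_isHomogeneous fun b hb => ?_)
  have hrow := mapDomain_fst_of_mem_Scomp hs (mem_support_iff.mpr hb)
  simp only [Finsupp.weight_eq_sum, Pi.one_apply, smul_eq_mul, mul_one, Fintype.sum_prod_type,
    ← hrow, mapDomain_fst_apply]

theorem piL_apply (x : MvPolynomial (Fin d × Fin n) ℂ) : piL n d x = rename Prod.snd x := by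
  rw [rename_eq_aeval]
  rfl

end Multigrading

theorem prod_sum_pow_eq_sum_prod_pow {R ρ κ : Type*} [CommSemiring R] [Fintype ρ] [Fintype κ]
    (y : ρ → κ → R) {e : κ → ℕ} (he : ∑ j, e j = 1) :
    ∏ j, (∑ r, y r j) ^ e j = ∑ r, ∏ j, y r j ^ e j := by
  classical
  obtain ⟨j₀, hj₀⟩ : ∃ j₀, e = Pi.single j₀ 1 := by
    obtain ⟨j₀, hj₀⟩ := (Finsupp.sum_eq_one_iff (Finsupp.equivFunOnFinite.symm e)).mp
      (by rwa [Finsupp.sum_fintype _ _ fun _ => rfl])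
    exact ⟨j₀, by simpa [← Finsupp.single_eq_pi_single] using congrArg (⇑) hj₀⟩
  have hpick (x : κ → R) : ∏ j, x j ^ e j = x j₀ := by
    rw [Fintype.prod_eq_single j₀ fun j hj => by simp [hj₀, hj]]
    simp [hj₀]
  simp only [hpick]

theorem monomial_one_eq_prod_prod {ι κ : Type*} [Fintype ι] [Fintype κ] (b : ι × κ →₀ ℕ) :
    monomial b (1 : ℂ) = ∏ i, ∏ j, X (i, j) ^ b (i, j) := by
  rw [monomial_eq, C_1, one_mul, Finsupp.prod_fintype _ _ (by simp), Fintype.prod_prod_type]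

section Expansion

variable {n d : ℕ}

theorem fiberSum_rename_snd_eq_sum_rename {u : Fin d → ℕ} (hu : ∀ i, u i ≤ 1)
    {s : MvPolynomial (Fin d × Fin n) ℂ} (hs : s ∈ Scomp n d u) :
    fiberSum Prod.snd (rename Prod.snd s) =
      ∑ g ∈ Fintype.piFinset (fun i => if u i = 0 then {i} else Finset.univ),
        rename (Prod.map g id) s := by
  have hmonomial : ∀ b ∈ s.support, fiberSum Prod.snd (rename Prod.snd (monomial b (1 : ℂ))) =
      ∑ g ∈ Fintype.piFinset (fun i => if u i = 0 then {i} else Finset.univ),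
        rename (Prod.map g id) (monomial b 1) := by
    intro b hb
    have hrow : ∀ i, ∑ j, b (i, j) = u i := fun i => by
      rw [← mapDomain_fst_apply, mapDomain_fst_of_mem_Scomp hs hb]
    simp only [monomial_one_eq_prod_prod, map_prod, map_pow, rename_X, fiberSum_snd_X,
      Prod.map_apply, id]
    rw [← Finset.prod_univ_sum (f := fun i r => ∏ j, (X (r, j) : MvPolynomial _ ℂ) ^ b (i, j))]
    refine Finset.prod_congr rfl fun i _ => ?_
    by_cases hui : u i = 0
    · have hzero : ∀ j, b (i, j) = 0 := fun j =>
        Finset.sum_eq_zero_iff.mp ((hrow i).trans hui) j (Finset.mem_univ j)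
      simp [hui, hzero]
    · rw [if_neg hui]
      exact prod_sum_pow_eq_sum_prod_pow (fun r j => X (r, j))
        ((hrow i).trans (by have := hu i; omega))
  conv_lhs => rw [s.as_sum]
  conv_rhs => rw [s.as_sum]
  simp only [map_sum]
  rw [Finset.sum_comm]
  refine Finset.sum_congr rfl fun b hb => ?_
  rw [← mul_one (coeff b s), ← smul_eq_mul, ← smul_monomial]
  simp only [map_smul, hmonomial b hb, Finset.smul_sum]

end Expansion

theorem exists_perm_eqOn_of_injOn {α : Type*} [Fintype α] {f : α → α} {s : Set α}
    (hf : s.InjOn f) : ∃ τ : Equiv.Perm α, s.EqOn τ f := by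
  classical
  obtain ⟨g, hg⟩ := Set.MapsTo.exists_equiv_extend_of_card_eq (t := Finset.univ)
    (by simp) (fun _ _ => Finset.mem_coe.mpr (Finset.mem_univ _)) hf
  exact ⟨g.trans (Equiv.subtypeUnivEquiv Finset.mem_univ), hg⟩

section Vanishing

variable {n d : ℕ}

theorem rename_prodMap_congr {u : Fin d → ℕ} {s : MvPolynomial (Fin d × Fin n) ℂ}
    (hs : s ∈ Scomp n d u) {g g' : Fin d → Fin d} (h : {i | u i ≠ 0}.EqOn g g') :
    rename (Prod.map g id) s = rename (Prod.map g' id) s := by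
  rw [rename_eq_aeval, rename_eq_aeval, aeval_def, aeval_def]
  refine eval₂_congr _ _ _ fun {p b} hp hb => ?_
  obtain ⟨r, j⟩ := p
  have hrj : b (r, j) ≠ 0 := Finsupp.mem_support_iff.mp hp
  have hrow : u r ≠ 0 := by
    rw [← mapDomain_fst_of_mem_Scomp hs (mem_support_iff.mpr hb), mapDomain_fst_apply]
    exact (Finset.sum_pos' (fun _ _ => Nat.zero_le _)
      ⟨j, Finset.mem_univ _, Nat.pos_of_ne_zero hrj⟩).ne'
  rw [Function.comp_apply, Function.comp_apply, Prod.map_apply, Prod.map_apply, h hrow]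

theorem apolar_rename_prodMap_eq_zero {F s : MvPolynomial (Fin d × Fin n) ℂ}
    (hF : F ∈ Scomp n d fun _ => 1) (hsym : IsSymm n d F) {u : Fin d → ℕ} (hu : ∀ i, u i ≤ 1)
    (hs : s ∈ Scomp n d u) (hann : apolar F s = 0) (g : Fin d → Fin d) :
    apolar F (rename (Prod.map g id) s) = 0 := by
  by_cases hinj : {i | u i ≠ 0}.InjOn g
  · obtain ⟨τ, hτ⟩ := exists_perm_eqOn_of_injOn hinj
    have := apolar_rename_rename_equiv (Equiv.prodCongr τ (Equiv.refl (Fin n))) F s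
    rwa [show ⇑(Equiv.prodCongr τ (Equiv.refl (Fin n))) = Prod.map τ id from rfl, hsym τ, hann,
      map_zero, rename_prodMap_congr hs hτ] at this
  · -- two rows of `s` land in the same row, in which `F` is only linear
    simp only [Set.InjOn, not_forall] at hinj
    obtain ⟨i₁, hi₁, i₂, hi₂, hg, hne⟩ := hinj
    refine apolar_eq_zero_of_forall_not_le fun a ha b hb hab => ?_
    obtain ⟨a₀, rfl, ha₀⟩ := coeff_rename_ne_zero _ _ _ (mem_support_iff.mp ha)
    have hrows : (a₀.mapDomain (Prod.map g id)).mapDomain Prod.fst =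
        (a₀.mapDomain Prod.fst).mapDomain g := by
      rw [← Finsupp.mapDomain_comp, ← Finsupp.mapDomain_comp]
      rfl
    have hle := mapDomain_mono Prod.fst hab (g i₁)
    rw [hrows, mapDomain_fst_of_mem_Scomp hF hb] at hle
    have hpair := add_le_mapDomain_apply (a₀.mapDomain Prod.fst) hne hg
    rw [mapDomain_fst_of_mem_Scomp hs (mem_support_iff.mpr ha₀)] at hpair
    have h₁ := hu i₁
    have h₂ := hu i₂
    simp only [Set.mem_ofPred_eq] at hi₁ hi₂ hle
    omega

theorem midIdeal_le_comap_annIdeal {F : MvPolynomial (Fin d × Fin n) ℂ}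
    (hF : F ∈ Scomp n d fun _ => 1) (hsym : IsSymm n d F) :
    midIdeal n d F ≤ (annIdeal F).comap ((fiberSum Prod.snd).comp (rename Prod.snd)) := by
  refine Ideal.span_le.mpr (Set.iUnion₂_subset fun u hu s ⟨hann, hs⟩ => ?_)
  have hu1 : ∀ i, u i ≤ 1 := fun i => hu.2.le i
  change apolar F (fiberSum Prod.snd (rename Prod.snd s)) = 0
  rw [fiberSum_rename_snd_eq_sum_rename hu1 hs, map_sum]
  exact Finset.sum_eq_zero fun g _ => apolar_rename_prodMap_eq_zero hF hsym hu1 hs hann g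

end Vanishing

theorem sum_ite_val_zero_ite_val_one {d : ℕ} (hd : 2 ≤ d) :
    (∑ i : Fin d, if (i : ℕ) = 0 then d - 1 else if (i : ℕ) = 1 then 1 else 0) = d := by
  obtain ⟨m, rfl⟩ : ∃ m, d = m + 2 := ⟨d - 2, by omega⟩
  simp [Fin.sum_univ_succ]

theorem stmt_15_general (n d : ℕ) (hd : 3 ≤ d)
    (F : MvPolynomial (Fin d × Fin n) ℂ)
    (hF : F ∈ Scomp n d fun _ => 1) (hsym : IsSymm n d F) :
    Submodule.map (piL n d) (restrictScalars ℂ (midIdeal n d F) ⊓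
        Scomp n d fun i => if (i : ℕ) = 0 then d - 1 else if (i : ℕ) = 1 then 1 else 0) ≤
      ann (pF n d F) ⊓ Vcomp n d := by
  rintro _ ⟨x, ⟨hxI, hxS⟩, rfl⟩
  refine ⟨?_, ?_⟩
  · have hx : apolar F (fiberSum Prod.snd (rename Prod.snd x)) = 0 :=
      midIdeal_le_comap_annIdeal hF hsym hxI
    show apolar (pF n d F) (piL n d x) = 0
    rw [piL_apply, pF, apolar_rename, hx, map_zero]
  · have hdeg := rename_snd_mem_Vcomp hxS
    rwa [sum_ite_val_zero_ite_val_one (by omega), ← piL_apply] at hdeg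

/-- Lemma 5.12: for a sharp concise symmetric tensor of minimal
border rank, if `I = ∑_{0<u<𝟏} S·Ann(F)_u`, then
`π(I_{(d−1)e_1 + e_2}) ⊆ Ann(p_F)_d`. -/
theorem stmt_15 (n d : ℕ) (hd : 3 ≤ d)
    (F : MvPolynomial (Fin d × Fin n) ℂ)
    (hF : F ∈ Scomp n d fun _ => 1) (hsym : IsSymm n d F) (hconc : Concise n d F)
    (hsharp : Sharp n d F) (hbrk : brk n d F = n) :
    Submodule.map (piL n d) (restrictScalars ℂ (midIdeal n d F) ⊓
        Scomp n d fun i => if (i : ℕ) = 0 then d - 1 else if (i : ℕ) = 1 then 1 else 0) ≤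
      ann (pF n d F) ⊓ Vcomp n d :=
  stmt_15_general n d hd F hF hsym

end BorderComon
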